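/- Let ℋ be a positive real-analytic function on an open neighborhood O of the origin of ℝ³ that is rotationally symmetric around the z-axis, i.e., ℋ(x cos θ + y sin θ, −x sin θ + y cos θ, t) = ℋ(x,y,t) for all (x,y,t) ∈ O and all θ ∈ ℝ. Let c ≠ 0 be a real constant and let ψ = (ψ₁,ψ₂,ψ₃): ℝ × (−R,R) → O be a real-analytic map satisfying ψ_uu + ψ_vv = 2 ℋ(ψ) ψ_u ×_L ψ_v, ψ(u,0) = 0 and ∂_vψ(u,0) = c(cos u, −sin u, 1) for all u ∈ ℝ. Then ψ is rotationally equivariant: for all θ ∈ ℝ and all (u,v) ∈ ℝ × (−R,R), ψ(u + θ, v) = (ψ₁(u,v) cos θ + ψ₂(u,v) sin θ, −ψ₁(u,v) sin θ + ψ₂(u,v) cos θ, ψ₃(u,v)). -/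

import Mathlib

noncomputable section

open Real Set Metric Filter MeasureTheory

/-- Points of Minkowski 3-space, as nested pairs. -/
abbrev R3 : Type := ℝ × ℝ × ℝ

/-- The Lorentzian inner product `⟨a,b⟩_L = a₁b₁ + a₂b₂ − a₃b₃` of Minkowski 3-space. -/
def lor (a b : R3) : ℝ := a.1 * b.1 + a.2.1 * b.2.1 - a.2.2 * b.2.2

/-- The Lorentzian cross product
`a ×_L b = (a₃b₂ − a₂b₃, a₁b₃ − a₃b₁, a₁b₂ − a₂b₁)`. -/
def lcross (a b : R3) : R3 :=
  (a.2.2 * b.2.1 - a.2.1 * b.2.2, a.1 * b.2.2 - a.2.2 * b.1, a.1 * b.2.1 - a.2.1 * b.1)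

/-- Partial derivative with respect to the first variable. -/
def pd1 {E : Type*} [NormedAddCommGroup E] [NormedSpace ℝ E]
    (f : ℝ × ℝ → E) (p : ℝ × ℝ) : E := fderiv ℝ f p (1, 0)

/-- Partial derivative with respect to the second variable. -/
def pd2 {E : Type*} [NormedAddCommGroup E] [NormedSpace ℝ E]
    (f : ℝ × ℝ → E) (p : ℝ × ℝ) : E := fderiv ℝ f p (0, 1)

def zx (z : ℝ × ℝ → ℝ) : ℝ × ℝ → ℝ := pd1 z
def zy (z : ℝ × ℝ → ℝ) : ℝ × ℝ → ℝ := pd2 z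
def zxx (z : ℝ × ℝ → ℝ) : ℝ × ℝ → ℝ := pd1 (zx z)
def zxy (z : ℝ × ℝ → ℝ) : ℝ × ℝ → ℝ := pd2 (zx z)
def zyy (z : ℝ × ℝ → ℝ) : ℝ × ℝ → ℝ := pd2 (zy z)

/-- Hessian determinant `z_xx z_yy − z_xy²`. -/
def hessDet (z : ℝ × ℝ → ℝ) (p : ℝ × ℝ) : ℝ := zxx z p * zyy z p - (zxy z p) ^ 2

/-- The punctured disk `{(x,y) : 0 < (x−x₀)² + (y−y₀)² < ρ²}`. -/
def PDisk (x₀ y₀ ρ : ℝ) : Set (ℝ × ℝ) :=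
  {p | 0 < (p.1 - x₀) ^ 2 + (p.2 - y₀) ^ 2 ∧ (p.1 - x₀) ^ 2 + (p.2 - y₀) ^ 2 < ρ ^ 2}

/-- `z` is an elliptic solution of the prescribed mean curvature equation for `H` on `U`,
with graph contained in `O`. -/
def IsEllSol (H : R3 → ℝ) (O : Set R3) (U : Set (ℝ × ℝ)) (z : ℝ × ℝ → ℝ) : Prop :=
  ContDiffOn ℝ 2 z U ∧
  (∀ p ∈ U, ((p.1, p.2, z p) : R3) ∈ O) ∧
  (∀ p ∈ U, (zx z p) ^ 2 + (zy z p) ^ 2 < 1) ∧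
  (∀ p ∈ U,
    (1 - (zy z p) ^ 2) * zxx z p + 2 * zx z p * zy z p * zxy z p
        + (1 - (zx z p) ^ 2) * zyy z p
      = 2 * H (p.1, p.2, z p) * (1 - (zx z p) ^ 2 - (zy z p) ^ 2) ^ ((3 : ℝ) / 2))

/-- The isolated singularity of `z` at `(x₀,y₀)` is removable: some `C²` function on a full
disk centered at `(x₀,y₀)` agrees with `z` on a punctured neighborhood. -/
def RemovableSing (x₀ y₀ : ℝ) (z : ℝ × ℝ → ℝ) : Prop :=
  ∃ ε > 0, ∃ Z : ℝ × ℝ → ℝ,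
    ContDiffOn ℝ 2 Z (ball ((x₀, y₀) : ℝ × ℝ) ε) ∧
    ∀ p ∈ ball ((x₀, y₀) : ℝ × ℝ) ε, p ≠ (x₀, y₀) → Z p = z p

/-- `H` is of class `C^{k,α}` on `O`: it is `C^k` and its `k`-th derivative is locally
`α`-Hölder on `O`. -/
def IsCkalpha (k : ℕ) (α : NNReal) (H : R3 → ℝ) (O : Set R3) : Prop :=
  ContDiffOn ℝ k H O ∧
  ∀ p ∈ O, ∃ ε > 0, ∃ C : NNReal,
    HolderOnWith C α (iteratedFDeriv ℝ k H) (ball p ε ∩ O)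

/-- The open strip `ℝ × (0,R)`. -/
def Strip (R : ℝ) : Set (ℝ × ℝ) := {p | 0 < p.2 ∧ p.2 < R}

/-- The open strip `ℝ × (−R,R)`. -/
def Strip2 (R : ℝ) : Set (ℝ × ℝ) := {p | -R < p.2 ∧ p.2 < R}

/-- The half-open strip `ℝ × [0,R)`. -/
def StripCl (R : ℝ) : Set (ℝ × ℝ) := {p | 0 ≤ p.2 ∧ p.2 < R}

/-- First two components of `ψ`: the planar projection `Π = (ψ₁, ψ₂)`. -/
def Pi2 (ψ : ℝ × ℝ → R3) (p : ℝ × ℝ) : ℝ × ℝ := ((ψ p).1, (ψ p).2.1)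

def comp1 (ψ : ℝ × ℝ → R3) : ℝ × ℝ → ℝ := fun p => (ψ p).1
def comp2 (ψ : ℝ × ℝ → R3) : ℝ × ℝ → ℝ := fun p => (ψ p).2.1
def comp3 (ψ : ℝ × ℝ → R3) : ℝ × ℝ → ℝ := fun p => (ψ p).2.2

/-- `ψ : ℝ × (0,R) → ℝ³` is a conformal parametrization of the graph of `z` near the
singularity `(x₀,y₀)`: it is 2π-periodic in `u`, its planar projection induces a
diffeomorphism with positive Jacobian from `(ℝ/2πℤ) × (0,R)` onto a punctured
neighborhood `W ⊆ Ω` of `(x₀,y₀)`, its third component is `z` of the first two, and the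
conformality conditions hold. -/
def IsConfParam (z : ℝ × ℝ → ℝ) (Ω : Set (ℝ × ℝ)) (x₀ y₀ R : ℝ)
    (ψ : ℝ × ℝ → R3) : Prop :=
  0 < R ∧
  ContDiffOn ℝ 1 ψ (Strip R) ∧
  (∀ u v : ℝ, ψ (u + 2 * π, v) = ψ (u, v)) ∧
  (∃ W : Set (ℝ × ℝ), W ⊆ Ω ∧ ((x₀, y₀) : ℝ × ℝ) ∉ W ∧
      insert ((x₀, y₀) : ℝ × ℝ) W ∈ nhds ((x₀, y₀) : ℝ × ℝ) ∧
      Pi2 ψ '' Strip R = W) ∧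
  (∀ p ∈ Strip R, ∀ q ∈ Strip R, Pi2 ψ p = Pi2 ψ q →
      p.2 = q.2 ∧ ∃ n : ℤ, p.1 - q.1 = 2 * π * n) ∧
  (∀ p ∈ Strip R,
      0 < pd1 (comp1 ψ) p * pd2 (comp2 ψ) p - pd2 (comp1 ψ) p * pd1 (comp2 ψ) p) ∧
  (∀ p ∈ Strip R, comp3 ψ p = z (Pi2 ψ p)) ∧
  (∀ p ∈ Strip R,
      lor (pd1 ψ p) (pd1 ψ p) = lor (pd2 ψ p) (pd2 ψ p) ∧
      0 < lor (pd1 ψ p) (pd1 ψ p) ∧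
      lor (pd1 ψ p) (pd2 ψ p) = 0)

/-- `ψ` extends real-analytically across `v = 0`, with `ψ(u,0) = p₀` and
`∂_vψ(u,0) = A(u)(cos u, −sin u, 1)`. -/
def ExtAnal (ψ : ℝ × ℝ → R3) (R : ℝ) (p₀ : R3) (A : ℝ → ℝ) : Prop :=
  ∃ ε > 0, ∃ Ψ : ℝ × ℝ → R3,
    AnalyticOnNhd ℝ Ψ {p : ℝ × ℝ | -ε < p.2 ∧ p.2 < R} ∧
    (∀ p ∈ Strip R, Ψ p = ψ p) ∧
    (∀ u : ℝ, Ψ (u, 0) = p₀) ∧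
    (∀ u : ℝ, pd2 Ψ (u, 0) = (A u * Real.cos u, -(A u * Real.sin u), A u))

/-- The class `𝒜₂` of 2π-periodic, real-analytic, nowhere vanishing functions. -/
def MemA2 (A : ℝ → ℝ) : Prop :=
  AnalyticOnNhd ℝ A univ ∧ (∀ u : ℝ, A (u + 2 * π) = A u) ∧ ∀ u : ℝ, A u ≠ 0

/-- The class `𝒜₁`: elliptic solutions on a punctured disk of radius `ρ` centered at
`(x₀,y₀)`, extending continuously with value `z₀`, whose Hessian determinant is
nonvanishing on a punctured neighborhood of `(x₀,y₀)`. -/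
def MemA1 (H : R3 → ℝ) (O : Set R3) (x₀ y₀ z₀ ρ : ℝ) (z : ℝ × ℝ → ℝ) : Prop :=
  0 < ρ ∧ IsEllSol H O (PDisk x₀ y₀ ρ) z ∧
  Tendsto z (nhdsWithin ((x₀, y₀) : ℝ × ℝ) (PDisk x₀ y₀ ρ)) (nhds z₀) ∧
  ∃ ε : ℝ, 0 < ε ∧ ε ≤ ρ ∧ ∀ p ∈ PDisk x₀ y₀ ε, hessDet z p ≠ 0

/-- `z` corresponds to `A`: some conformal parametrization of the graph of `z` near the
singularity extends real-analytically across `v = 0` with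
`∂_vψ(u,0) = A(u)(cos u, −sin u, 1)`. -/
def Corr (z : ℝ × ℝ → ℝ) (x₀ y₀ z₀ ρ : ℝ) (A : ℝ → ℝ) : Prop :=
  ∃ R : ℝ, ∃ ψ : ℝ × ℝ → R3,
    IsConfParam z (PDisk x₀ y₀ ρ) x₀ y₀ R ψ ∧ ExtAnal ψ R ((x₀, y₀, z₀) : R3) A

/-- The induced (first fundamental form) metric of the graph of `z`,
`ds² = (1−z_x²)dx² − 2 z_x z_y dx dy + (1−z_y²)dy²`, as a bilinear form. -/
def dsq (z : ℝ × ℝ → ℝ) (p : ℝ × ℝ) (ξ η : ℝ × ℝ) : ℝ :=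
  (1 - (zx z p) ^ 2) * ξ.1 * η.1 - zx z p * zy z p * (ξ.1 * η.2 + ξ.2 * η.1)
    + (1 - (zy z p) ^ 2) * ξ.2 * η.2

/-- `(Ω, ds²)` is conformally equivalent to the planar domain `D`: there is a `C¹`
diffeomorphism `Φ : Ω → D` and a positive function `λ` with
`⟨DΦ(ξ), DΦ(η)⟩_euc = λ · ds²(ξ,η)`. -/
def ConfEquiv (z : ℝ × ℝ → ℝ) (Ω D : Set (ℝ × ℝ)) : Prop :=
  ∃ (Φ : ℝ × ℝ → ℝ × ℝ) (Φinv : ℝ × ℝ → ℝ × ℝ) (lam : ℝ × ℝ → ℝ),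
    ContDiffOn ℝ 1 Φ Ω ∧ ContDiffOn ℝ 1 Φinv D ∧
    (∀ p ∈ Ω, Φ p ∈ D ∧ Φinv (Φ p) = p) ∧
    (∀ q ∈ D, Φinv q ∈ Ω ∧ Φ (Φinv q) = q) ∧
    (∀ p ∈ Ω, 0 < lam p ∧
      ∀ ξ η : ℝ × ℝ, (fderiv ℝ Φ p ξ).1 * (fderiv ℝ Φ p η).1
          + (fderiv ℝ Φ p ξ).2 * (fderiv ℝ Φ p η).2 = lam p * dsq z p ξ η)

set_option linter.unusedSectionVars false
set_option linter.unusedVariables false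



section Infra
variable {E F W : Type*} [NormedAddCommGroup E] [NormedSpace ℝ E] [CompleteSpace E]
  [NormedAddCommGroup F] [NormedSpace ℝ F] [CompleteSpace F]
  [NormedAddCommGroup W] [NormedSpace ℝ W] [CompleteSpace W]
  {S : Set (ℝ × ℝ)} {f g : ℝ × ℝ → E}

lemma pd1_analytic (hS : IsOpen S) (hf : AnalyticOnNhd ℝ f S) :
    AnalyticOnNhd ℝ (pd1 f) S := by
  intro p hp
  exact ((ContinuousLinearMap.id ℝ ((ℝ × ℝ) →L[ℝ] E)).analyticAt_bilinear
    (fderiv ℝ f p, ((1 : ℝ), (0 : ℝ)))).comp₂ (f := fderiv ℝ f) (g := fun _ => ((1 : ℝ), (0 : ℝ))) (hf.fderiv p hp) analyticAt_const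

lemma pd2_analytic (hS : IsOpen S) (hf : AnalyticOnNhd ℝ f S) :
    AnalyticOnNhd ℝ (pd2 f) S := by
  intro p hp
  exact ((ContinuousLinearMap.id ℝ ((ℝ × ℝ) →L[ℝ] E)).analyticAt_bilinear
    (fderiv ℝ f p, ((0 : ℝ), (1 : ℝ)))).comp₂ (f := fderiv ℝ f) (g := fun _ => ((0 : ℝ), (1 : ℝ))) (hf.fderiv p hp) analyticAt_const

lemma pd2_iter_analytic (hS : IsOpen S) (hf : AnalyticOnNhd ℝ f S) (k : ℕ) :
    AnalyticOnNhd ℝ (pd2^[k] f) S := by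
  induction k with
  | zero => exact hf
  | succ k ih => rw [Function.iterate_succ_apply']; exact pd2_analytic hS ih

lemma eqOn_pd2 (hS : IsOpen S) (h : EqOn f g S) : EqOn (pd2 f) (pd2 g) S := by
  intro p hp
  have hev : f =ᶠ[nhds p] g := eventually_of_mem (hS.mem_nhds hp) h
  simp only [pd2, hev.fderiv_eq]

lemma eqOn_pd1 (hS : IsOpen S) (h : EqOn f g S) : EqOn (pd1 f) (pd1 g) S := by
  intro p hp
  have hev : f =ᶠ[nhds p] g := eventually_of_mem (hS.mem_nhds hp) h
  simp only [pd1, hev.fderiv_eq]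

lemma eqOn_pd2_iter (hS : IsOpen S) (h : EqOn f g S) (k : ℕ) :
    EqOn (pd2^[k] f) (pd2^[k] g) S := by
  induction k with
  | zero => exact h
  | succ k ih =>
    rw [Function.iterate_succ_apply', Function.iterate_succ_apply']
    exact eqOn_pd2 hS ih

lemma pd2_add_pt {p : ℝ × ℝ} (hf : DifferentiableAt ℝ f p) (hg : DifferentiableAt ℝ g p) :
    pd2 (fun q => f q + g q) p = pd2 f p + pd2 g p := by
  simp only [pd2, fderiv_fun_add hf hg]; rfl

lemma pd2_sub_pt {p : ℝ × ℝ} (hf : DifferentiableAt ℝ f p) (hg : DifferentiableAt ℝ g p) :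
    pd2 (fun q => f q - g q) p = pd2 f p - pd2 g p := by
  simp only [pd2, fderiv_fun_sub hf hg]; rfl

lemma pd1_add_pt {p : ℝ × ℝ} (hf : DifferentiableAt ℝ f p) (hg : DifferentiableAt ℝ g p) :
    pd1 (fun q => f q + g q) p = pd1 f p + pd1 g p := by
  simp only [pd1, fderiv_fun_add hf hg]; rfl

lemma pd1_sub_pt {p : ℝ × ℝ} (hf : DifferentiableAt ℝ f p) (hg : DifferentiableAt ℝ g p) :
    pd1 (fun q => f q - g q) p = pd1 f p - pd1 g p := by
  simp only [pd1, fderiv_fun_sub hf hg]; rfl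

lemma pd2_iter_add (hS : IsOpen S) (hf : AnalyticOnNhd ℝ f S) (hg : AnalyticOnNhd ℝ g S)
    (k : ℕ) : EqOn (pd2^[k] (fun q => f q + g q))
      (fun q => pd2^[k] f q + pd2^[k] g q) S := by
  induction k with
  | zero => intro p hp; rfl
  | succ k ih =>
    rw [Function.iterate_succ_apply', Function.iterate_succ_apply',
      Function.iterate_succ_apply']
    intro p hp
    have h1 : EqOn (pd2 (pd2^[k] (fun q => f q + g q)))
        (pd2 (fun q => pd2^[k] f q + pd2^[k] g q)) S := eqOn_pd2 hS ih
    rw [h1 hp, pd2_add_pt ((pd2_iter_analytic hS hf k p hp).differentiableAt)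
      ((pd2_iter_analytic hS hg k p hp).differentiableAt)]

/-- product rule for a fixed continuous bilinear map -/
lemma pd2_bilin_pt (B : E →L[ℝ] F →L[ℝ] W) {c : ℝ × ℝ → E} {g : ℝ × ℝ → F} {p : ℝ × ℝ}
    (hc : DifferentiableAt ℝ c p) (hg : DifferentiableAt ℝ g p) :
    pd2 (fun q => B (c q) (g q)) p = B (pd2 c p) (g p) + B (c p) (pd2 g p) := by
  have h1 : HasFDerivAt (fun q => B (c q)) ((B.comp (fderiv ℝ c p))) p :=
    B.hasFDerivAt.comp p hc.hasFDerivAt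
  have h2 := h1.clm_apply hg.hasFDerivAt
  have h3 := h2.fderiv
  simp only [pd2, h3]
  simp [ContinuousLinearMap.add_apply, ContinuousLinearMap.comp_apply,
    ContinuousLinearMap.flip_apply]
  abel

lemma pd1_bilin_pt (B : E →L[ℝ] F →L[ℝ] W) {c : ℝ × ℝ → E} {g : ℝ × ℝ → F} {p : ℝ × ℝ}
    (hc : DifferentiableAt ℝ c p) (hg : DifferentiableAt ℝ g p) :
    pd1 (fun q => B (c q) (g q)) p = B (pd1 c p) (g p) + B (c p) (pd1 g p) := by
  have h1 : HasFDerivAt (fun q => B (c q)) ((B.comp (fderiv ℝ c p))) p :=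
    B.hasFDerivAt.comp p hc.hasFDerivAt
  have h2 := h1.clm_apply hg.hasFDerivAt
  have h3 := h2.fderiv
  simp only [pd1, h3]
  simp [ContinuousLinearMap.add_apply, ContinuousLinearMap.comp_apply,
    ContinuousLinearMap.flip_apply]
  abel

lemma bilin_analytic (B : E →L[ℝ] F →L[ℝ] W) {c : ℝ × ℝ → E} {g : ℝ × ℝ → F}
    (hc : AnalyticOnNhd ℝ c S) (hg : AnalyticOnNhd ℝ g S) :
    AnalyticOnNhd ℝ (fun q => B (c q) (g q)) S := fun p hp =>
  (B.analyticAt_bilinear (c p, g p)).comp₂ (hc p hp) (hg p hp)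

/-- derivative of the restriction to a horizontal line -/
lemma hasDerivAt_line1 {u v : ℝ} (hg : DifferentiableAt ℝ f (u, v)) :
    HasDerivAt (fun t => f (t, v)) (pd1 f (u, v)) u := by
  have hγ : HasDerivAt (fun t : ℝ => ((t, v) : ℝ × ℝ)) ((1 : ℝ), (0 : ℝ)) u :=
    (hasDerivAt_id u).prodMk (hasDerivAt_const u v)
  exact hg.hasFDerivAt.comp_hasDerivAt u hγ

lemma hasDerivAt_line2 {u v : ℝ} (hg : DifferentiableAt ℝ f (u, v)) :
    HasDerivAt (fun t => f (u, t)) (pd2 f (u, v)) v := by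
  have hγ : HasDerivAt (fun t : ℝ => ((u, t) : ℝ × ℝ)) ((0 : ℝ), (1 : ℝ)) v :=
    (hasDerivAt_const v u).prodMk (hasDerivAt_id v)
  exact hg.hasFDerivAt.comp_hasDerivAt v hγ

/-- Schwarz symmetry of mixed partials for analytic functions. -/
lemma pd_swap (hS : IsOpen S) (hf : AnalyticOnNhd ℝ f S) {p : ℝ × ℝ} (hp : p ∈ S) :
    pd1 (pd2 f) p = pd2 (pd1 f) p := by
  set f' := fderiv ℝ f with hf'def
  have hev : ∀ᶠ y in nhds p, HasFDerivAt f (f' y) y := by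
    filter_upwards [hS.mem_nhds hp] with y hy using (hf y hy).differentiableAt.hasFDerivAt
  have hf'd : HasFDerivAt f' (fderiv ℝ f' p) p :=
    ((hf.fderiv) p hp).differentiableAt.hasFDerivAt
  have hsym := second_derivative_symmetric_of_eventually hev hf'd
  have h1 : HasFDerivAt (fun q => f' q ((0 : ℝ), (1 : ℝ)))
      (((fderiv ℝ f' p).flip) ((0 : ℝ), (1 : ℝ))) p := by
    have := hf'd.clm_apply (hasFDerivAt_const ((0 : ℝ), (1 : ℝ)) p)
    simpa using this
  have h2 : HasFDerivAt (fun q => f' q ((1 : ℝ), (0 : ℝ)))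
      (((fderiv ℝ f' p).flip) ((1 : ℝ), (0 : ℝ))) p := by
    have := hf'd.clm_apply (hasFDerivAt_const ((1 : ℝ), (0 : ℝ)) p)
    simpa using this
  have e1 : pd1 (pd2 f) p = fderiv ℝ f' p (1, 0) (0, 1) := by
    have : pd2 f = fun q => f' q ((0 : ℝ), (1 : ℝ)) := rfl
    rw [pd1, this, h1.fderiv]
    simp [ContinuousLinearMap.flip_apply]
  have e2 : pd2 (pd1 f) p = fderiv ℝ f' p (0, 1) (1, 0) := by
    have : pd1 f = fun q => f' q ((1 : ℝ), (0 : ℝ)) := rfl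
    rw [pd2, this, h2.fderiv]
    simp [ContinuousLinearMap.flip_apply]
  rw [e1, e2, hsym]

/-- commuting `pd1` past iterates of `pd2` (on an open set, for analytic `f`) -/
lemma pd2_iter_pd1 (hS : IsOpen S) (hf : AnalyticOnNhd ℝ f S) (k : ℕ) :
    EqOn (pd2^[k] (pd1 f)) (pd1 (pd2^[k] f)) S := by
  induction k generalizing f with
  | zero => intro p hp; rfl
  | succ k ih =>
    intro p hp
    rw [Function.iterate_succ_apply]
    have e1 : EqOn (pd2 (pd1 f)) (pd1 (pd2 f)) S := fun q hq => (pd_swap hS hf hq).symm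
    have e2 : EqOn (pd2^[k] (pd2 (pd1 f))) (pd2^[k] (pd1 (pd2 f))) S :=
      eqOn_pd2_iter hS e1 k
    rw [e2 hp, ih (pd2_analytic hS hf) hp, Function.iterate_succ_apply]

end Infra


section Vanish
variable {E F W : Type*} [NormedAddCommGroup E] [NormedSpace ℝ E] [CompleteSpace E]
  [NormedAddCommGroup F] [NormedSpace ℝ F] [CompleteSpace F]
  [NormedAddCommGroup W] [NormedSpace ℝ W] [CompleteSpace W]
  {R : ℝ}

lemma strip2_open : IsOpen (Strip2 R) := by
  have : Strip2 R = (fun p : ℝ × ℝ => p.2) ⁻¹' (Set.Ioo (-R) R) := rfl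
  rw [this]; exact isOpen_Ioo.preimage continuous_snd

lemma mem_strip2 (hR : 0 < R) (u : ℝ) : ((u, 0) : ℝ × ℝ) ∈ Strip2 R :=
  ⟨by simpa using hR, hR⟩

/-- the `u`-derivative of a function vanishing on the line `v = 0` vanishes there -/
lemma pd1_line_vanish {f : ℝ × ℝ → E} {u : ℝ} (hf : DifferentiableAt ℝ f (u, 0))
    (h0 : ∀ t : ℝ, f (t, 0) = 0) : pd1 f (u, 0) = 0 := by
  have h1 := hasDerivAt_line1 hf
  have h2 : HasDerivAt (fun t : ℝ => f (t, 0)) 0 u := by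
    have : (fun t : ℝ => f (t, 0)) = fun _ => (0 : E) := funext h0
    rw [this]; exact hasDerivAt_const u 0
  exact h1.unique h2

/-- Key inductive vanishing lemma for "bilinear shape" products. -/
lemma bv_vanish (hR : 0 < R) (B : E →L[ℝ] F →L[ℝ] W) (k : ℕ) :
    ∀ (c : ℝ × ℝ → E) (g : ℝ × ℝ → F), AnalyticOnNhd ℝ c (Strip2 R) →
    AnalyticOnNhd ℝ g (Strip2 R) → (∀ j ≤ k, ∀ u : ℝ, pd2^[j] g (u, 0) = 0) →
    ∀ u : ℝ, pd2^[k] (fun p => B (c p) (g p)) (u, 0) = 0 := by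
  induction k with
  | zero =>
    intro c g _ _ hv u
    have h0 := hv 0 le_rfl u
    simp only [Function.iterate_zero_apply] at h0
    simp [h0]
  | succ k ih =>
    intro c g hc hg hv u
    have hS := strip2_open (R := R)
    have hmem := mem_strip2 hR u
    rw [Function.iterate_succ_apply]
    have e1 : EqOn (pd2 (fun p => B (c p) (g p)))
        (fun p => B (pd2 c p) (g p) + B (c p) (pd2 g p)) (Strip2 R) := fun q hq =>
      pd2_bilin_pt B (hc q hq).differentiableAt (hg q hq).differentiableAt
    have e2 := eqOn_pd2_iter hS e1 k
    rw [e2 hmem]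
    have hc2 := pd2_analytic hS hc
    have hg2 := pd2_analytic hS hg
    have hBa : AnalyticOnNhd ℝ (fun p => B (pd2 c p) (g p)) (Strip2 R) :=
      bilin_analytic B hc2 hg
    have hBb : AnalyticOnNhd ℝ (fun p => B (c p) (pd2 g p)) (Strip2 R) :=
      bilin_analytic B hc hg2
    rw [pd2_iter_add hS hBa hBb k hmem]
    have ha := ih (pd2 c) g hc2 hg (fun j hj u' => hv j (le_trans hj (Nat.le_succ k)) u') u
    have hb := ih c (pd2 g) hc hg2 (fun j hj u' => by
        rw [← Function.iterate_succ_apply]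
        exact hv (j + 1) (Nat.succ_le_succ hj) u') u
    simp [ha, hb]

end Vanish

section OneD
variable {E : Type*} [NormedAddCommGroup E] [NormedSpace ℝ E] [CompleteSpace E]

/-- 1-D identity theorem: an analytic function on an interval all of whose iterated
derivatives vanish at an interior point vanishes identically. -/
lemma oneD_identity {f : ℝ → E} {R : ℝ} (hR : 0 < R)
    (hf : AnalyticOnNhd ℝ f (Set.Ioo (-R) R))
    (hd : ∀ k : ℕ, deriv^[k] f 0 = 0) :
    ∀ v ∈ Set.Ioo (-R) R, f v = 0 := by
  have h0 : (0 : ℝ) ∈ Set.Ioo (-R) R := ⟨by linarith, hR⟩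
  obtain ⟨p, hp⟩ := hf 0 h0
  obtain ⟨r, hb⟩ := hp
  have hzero : ∀ y : ℝ, y ∈ EMetric.ball (0 : ℝ) r → f y = 0 := by
    intro y hy
    have hs := hb.hasSum_iteratedFDeriv hy
    have h0s : ∀ n : ℕ, ((n.factorial : ℝ)⁻¹ • iteratedFDeriv ℝ n f 0 fun _ => y) = 0 := by
      intro n
      have : (iteratedFDeriv ℝ n f 0 : (Fin n → ℝ) → E) (fun _ => y)
          = (∏ _i : Fin n, y) • iteratedDeriv n f 0 :=
        iteratedFDeriv_apply_eq_iteratedDeriv_mul_prod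
      rw [this, iteratedDeriv_eq_iterate, hd n]
      simp
    have : HasSum (fun n : ℕ => ((n.factorial : ℝ)⁻¹ • iteratedFDeriv ℝ n f 0 fun _ => y)) 0 := by
      simpa [h0s] using hasSum_zero (α := E)
    have := hs.unique this
    simpa using this
  have hev : f =ᶠ[nhds (0 : ℝ)] 0 := by
    filter_upwards [EMetric.ball_mem_nhds (0 : ℝ) hb.r_pos] with y hy using hzero y hy
  exact fun v hv => hf.eqOn_zero_of_preconnected_of_eventuallyEq_zero
    isPreconnected_Ioo h0 hev hv

end OneD

section Geom

/-- infinitesimal generator of the rotation group around the z-axis -/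
def Jv : R3 →L[ℝ] R3 :=
  ((ContinuousLinearMap.fst ℝ ℝ ℝ).comp (ContinuousLinearMap.snd ℝ ℝ (ℝ × ℝ))).prod
    ((-(ContinuousLinearMap.fst ℝ ℝ (ℝ × ℝ))).prod 0)

@[simp] lemma Jv_apply (a : R3) : Jv a = (a.2.1, -a.1, 0) := rfl

lemma abs_c1 (a : R3) : |a.1| ≤ ‖a‖ := by
  have := norm_fst_le a; simpa using this
lemma abs_c2 (a : R3) : |a.2.1| ≤ ‖a‖ := by
  have h1 := norm_snd_le a
  have h2 := norm_fst_le a.2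
  simp only [Real.norm_eq_abs] at *
  linarith
lemma abs_c3 (a : R3) : |a.2.2| ≤ ‖a‖ := by
  have h1 := norm_snd_le a
  have h2 := norm_snd_le a.2
  simp only [Real.norm_eq_abs] at *
  linarith

lemma lcross_bbm : IsBoundedBilinearMap ℝ (fun x : R3 × R3 => lcross x.1 x.2) := by
  constructor
  · intro x₁ x₂ y; simp [lcross, Prod.ext_iff]; refine ⟨by ring, by ring, by ring⟩
  · intro c x y; simp [lcross, Prod.ext_iff, smul_eq_mul]
    refine ⟨by ring, by ring, by ring⟩
  · intro x y₁ y₂; simp [lcross, Prod.ext_iff]; refine ⟨by ring, by ring, by ring⟩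
  · intro c x y; simp [lcross, Prod.ext_iff, smul_eq_mul]
    refine ⟨by ring, by ring, by ring⟩
  · refine ⟨2, by norm_num, fun a b => ?_⟩
    have k1 := abs_c1 a; have k2 := abs_c2 a; have k3 := abs_c3 a
    have l1 := abs_c1 b; have l2 := abs_c2 b; have l3 := abs_c3 b
    have hna : (0:ℝ) ≤ ‖a‖ := norm_nonneg a
    have hnb : (0:ℝ) ≤ ‖b‖ := norm_nonneg b
    have key : ∀ x y z w : ℝ, |x| ≤ ‖a‖ → |y| ≤ ‖b‖ → |z| ≤ ‖a‖ → |w| ≤ ‖b‖ →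
        ‖x * y - z * w‖ ≤ 2 * ‖a‖ * ‖b‖ := by
      intro x y z w hx hy hz hw
      rw [Real.norm_eq_abs]
      have h1 : |x * y| ≤ ‖a‖ * ‖b‖ := by
        rw [abs_mul]; exact mul_le_mul hx hy (abs_nonneg y) hna
      have h2 : |z * w| ≤ ‖a‖ * ‖b‖ := by
        rw [abs_mul]; exact mul_le_mul hz hw (abs_nonneg w) hna
      calc |x * y - z * w| ≤ |x * y| + |z * w| := abs_sub _ _
        _ ≤ 2 * ‖a‖ * ‖b‖ := by linarith
    have n1 : ‖(lcross a b).1‖ ≤ 2 * ‖a‖ * ‖b‖ := key _ _ _ _ k3 l2 k2 l3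
    have n2 : ‖(lcross a b).2.1‖ ≤ 2 * ‖a‖ * ‖b‖ := key _ _ _ _ k1 l3 k3 l1
    have n3 : ‖(lcross a b).2.2‖ ≤ 2 * ‖a‖ * ‖b‖ := key _ _ _ _ k1 l2 k2 l1
    calc ‖lcross a b‖ ≤ max ‖(lcross a b).1‖ ‖(lcross a b).2‖ := le_of_eq rfl
      _ ≤ 2 * ‖a‖ * ‖b‖ := by
        apply max_le n1
        calc ‖(lcross a b).2‖ ≤ max ‖(lcross a b).2.1‖ ‖(lcross a b).2.2‖ := le_of_eq rfl
          _ ≤ 2 * ‖a‖ * ‖b‖ := max_le n2 n3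

def lcrossL : R3 →L[ℝ] R3 →L[ℝ] R3 := lcross_bbm.toContinuousLinearMap

@[simp] lemma lcrossL_apply (a b : R3) : lcrossL a b = lcross a b := rfl

lemma Jv_lcross (a b : R3) :
    lcross (Jv a) b + lcross a (Jv b) = Jv (lcross a b) := by
  simp [lcross, Prod.ext_iff]
  refine ⟨by ring, by ring, by ring⟩

end Geom

section Rot

/-- rotation invariance of `H` implies its derivative kills the rotation generator -/
lemma rot_fderiv_zero {H : R3 → ℝ} {O : Set R3}
    (hHa : AnalyticOnNhd ℝ H O)
    (hrot : ∀ θ : ℝ, ∀ p ∈ O,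
      ((p.1 * Real.cos θ + p.2.1 * Real.sin θ,
        -(p.1 * Real.sin θ) + p.2.1 * Real.cos θ, p.2.2) : R3) ∈ O ∧
      H ((p.1 * Real.cos θ + p.2.1 * Real.sin θ,
          -(p.1 * Real.sin θ) + p.2.1 * Real.cos θ, p.2.2) : R3) = H p)
    {q : R3} (hq : q ∈ O) : fderiv ℝ H q (Jv q) = 0 := by
  set γ : ℝ → R3 := fun θ =>
    ((q.1 * Real.cos θ + q.2.1 * Real.sin θ,
      -(q.1 * Real.sin θ) + q.2.1 * Real.cos θ, q.2.2) : R3) with hγ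
  have hγ0 : γ 0 = q := by simp [hγ]
  have h1 : HasDerivAt (fun θ : ℝ => q.1 * Real.cos θ + q.2.1 * Real.sin θ) q.2.1 0 := by
    have := ((Real.hasDerivAt_cos 0).const_mul q.1).fun_add
      ((Real.hasDerivAt_sin 0).const_mul q.2.1)
    simpa using this
  have h2 : HasDerivAt (fun θ : ℝ => -(q.1 * Real.sin θ) + q.2.1 * Real.cos θ) (-q.1) 0 := by
    have := (((Real.hasDerivAt_sin 0).const_mul q.1).fun_neg).fun_add
      ((Real.hasDerivAt_cos 0).const_mul q.2.1)
    simpa using this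
  have hγd : HasDerivAt γ ((q.2.1, -q.1, 0) : R3) 0 :=
    h1.prodMk (h2.prodMk (hasDerivAt_const 0 q.2.2))
  have hHd : HasFDerivAt H (fderiv ℝ H q) q := (hHa q hq).differentiableAt.hasFDerivAt
  have hcomp : HasDerivAt (fun θ => H (γ θ)) (fderiv ℝ H q (q.2.1, -q.1, 0)) 0 := by
    have hHd' : HasFDerivAt H (fderiv ℝ H q) (γ 0) := by rw [hγ0]; exact hHd
    exact hHd'.comp_hasDerivAt 0 hγd
  have hconst : (fun θ => H (γ θ)) = fun _ => H q := funext fun θ => (hrot θ q hq).2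
  have hzero : HasDerivAt (fun θ => H (γ θ)) 0 0 := by
    rw [hconst]; exact hasDerivAt_const 0 (H q)
  have := hcomp.unique hzero
  simpa [Jv_apply] using this

end Rot

section Infra2
variable {E F W : Type*} [NormedAddCommGroup E] [NormedSpace ℝ E] [CompleteSpace E]
  [NormedAddCommGroup F] [NormedSpace ℝ F] [CompleteSpace F]
  [NormedAddCommGroup W] [NormedSpace ℝ W] [CompleteSpace W]
  {S : Set (ℝ × ℝ)} {f g : ℝ × ℝ → E}

lemma pd1_smul_pt {c : ℝ × ℝ → ℝ} {g : ℝ × ℝ → E} {p : ℝ × ℝ}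
    (hc : DifferentiableAt ℝ c p) (hg : DifferentiableAt ℝ g p) :
    pd1 (fun q => c q • g q) p = pd1 c p • g p + c p • pd1 g p := by
  have := pd1_bilin_pt ((ContinuousLinearMap.lsmul ℝ ℝ) : ℝ →L[ℝ] E →L[ℝ] E) hc hg
  simpa using this

lemma pd2_smul_pt {c : ℝ × ℝ → ℝ} {g : ℝ × ℝ → E} {p : ℝ × ℝ}
    (hc : DifferentiableAt ℝ c p) (hg : DifferentiableAt ℝ g p) :
    pd2 (fun q => c q • g q) p = pd2 c p • g p + c p • pd2 g p := by
  have := pd2_bilin_pt ((ContinuousLinearMap.lsmul ℝ ℝ) : ℝ →L[ℝ] E →L[ℝ] E) hc hg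
  simpa using this

lemma pd1_clm_pt (L : E →L[ℝ] F) {p : ℝ × ℝ} (hf : DifferentiableAt ℝ f p) :
    pd1 (fun q => L (f q)) p = L (pd1 f p) := by
  have h := (L.hasFDerivAt.comp p hf.hasFDerivAt).fderiv
  rw [pd1, show (fun q => L (f q)) = (⇑L ∘ f) from rfl, h]; rfl

lemma pd2_clm_pt (L : E →L[ℝ] F) {p : ℝ × ℝ} (hf : DifferentiableAt ℝ f p) :
    pd2 (fun q => L (f q)) p = L (pd2 f p) := by
  have h := (L.hasFDerivAt.comp p hf.hasFDerivAt).fderiv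
  rw [pd2, show (fun q => L (f q)) = (⇑L ∘ f) from rfl, h]; rfl

lemma pd2_iter_sub (hS : IsOpen S) (hf : AnalyticOnNhd ℝ f S) (hg : AnalyticOnNhd ℝ g S)
    (k : ℕ) : Set.EqOn (pd2^[k] (fun q => f q - g q))
      (fun q => pd2^[k] f q - pd2^[k] g q) S := by
  induction k with
  | zero => intro p hp; rfl
  | succ k ih =>
    rw [Function.iterate_succ_apply', Function.iterate_succ_apply',
      Function.iterate_succ_apply']
    intro p hp
    have h1 := eqOn_pd2 hS ih
    rw [h1 hp, pd2_sub_pt ((pd2_iter_analytic hS hf k p hp).differentiableAt)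
      ((pd2_iter_analytic hS hg k p hp).differentiableAt)]

end Infra2

section Geom2

lemma lcross_add_left (a b x : R3) : lcross (a + b) x = lcross a x + lcross b x :=
  lcross_bbm.add_left a b x

lemma lcross_add_right (a x y : R3) : lcross a (x + y) = lcross a x + lcross a y :=
  lcross_bbm.add_right a x y

end Geom2

section KeyPDE

variable {O : Set R3} {R : ℝ} {H : R3 → ℝ} {ψ : ℝ × ℝ → R3}

lemma key_pde (hR : 0 < R)
    (hHa : AnalyticOnNhd ℝ H O)
    (hrot : ∀ θ : ℝ, ∀ p ∈ O,
      ((p.1 * Real.cos θ + p.2.1 * Real.sin θ,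
        -(p.1 * Real.sin θ) + p.2.1 * Real.cos θ, p.2.2) : R3) ∈ O ∧
      H ((p.1 * Real.cos θ + p.2.1 * Real.sin θ,
          -(p.1 * Real.sin θ) + p.2.1 * Real.cos θ, p.2.2) : R3) = H p)
    (hψO : ∀ p ∈ Strip2 R, ψ p ∈ O)
    (hψa : AnalyticOnNhd ℝ ψ (Strip2 R))
    (hsys : ∀ p ∈ Strip2 R,
      pd1 (pd1 ψ) p + pd2 (pd2 ψ) p = (2 * H (ψ p)) • lcross (pd1 ψ p) (pd2 ψ p)) :
    Set.EqOn (pd2 (pd2 (fun q => pd1 ψ q - Jv (ψ q))))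
      (fun p => (2 * fderiv ℝ H (ψ p) (pd1 ψ p - Jv (ψ p))) • lcross (pd1 ψ p) (pd2 ψ p)
        + (2 * H (ψ p)) • (lcross (pd1 (fun q => pd1 ψ q - Jv (ψ q)) p) (pd2 ψ p)
            + lcross (pd1 ψ p) (pd2 (fun q => pd1 ψ q - Jv (ψ q)) p))
        - pd1 (pd1 (fun q => pd1 ψ q - Jv (ψ q))) p) (Strip2 R) := by
  intro p hp
  have hS : IsOpen (Strip2 R) := strip2_open
  have hψu := pd1_analytic hS hψa
  have hψv := pd2_analytic hS hψa
  have hψuu := pd1_analytic hS hψu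
  have hψvv := pd2_analytic hS hψv
  have hJψ : AnalyticOnNhd ℝ (fun q => Jv (ψ q)) (Strip2 R) :=
    fun q hq => (Jv.analyticAt _).comp (hψa q hq)
  have hh : AnalyticOnNhd ℝ (fun q => pd1 ψ q - Jv (ψ q)) (Strip2 R) :=
    fun q hq => (hψu q hq).sub (hJψ q hq)
  -- swap identities
  have Esw : Set.EqOn (pd1 (pd2 ψ)) (pd2 (pd1 ψ)) (Strip2 R) :=
    fun q hq => pd_swap hS hψa hq
  have Esw2 : Set.EqOn (pd1 (pd2 (pd2 ψ))) (pd2 (pd1 (pd2 ψ))) (Strip2 R) :=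
    fun q hq => pd_swap hS hψv hq
  -- original system as EqOn, differentiate in u
  have E0 : Set.EqOn (fun q => pd1 (pd1 ψ) q + pd2 (pd2 ψ) q)
      (fun q => (2 * H (ψ q)) • lcross (pd1 ψ q) (pd2 ψ q)) (Strip2 R) :=
    fun q hq => hsys q hq
  have E1 := eqOn_pd1 hS E0
  have main := E1 hp
  -- expand LHS of main
  have l1 : pd1 (fun q => pd1 (pd1 ψ) q + pd2 (pd2 ψ) q) p
      = pd1 (pd1 (pd1 ψ)) p + pd1 (pd2 (pd2 ψ)) p :=
    pd1_add_pt (hψuu p hp).differentiableAt (hψvv p hp).differentiableAt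
  have l2 : pd1 (pd2 (pd2 ψ)) p = pd2 (pd2 (pd1 ψ)) p := by
    rw [Esw2 hp]
    exact eqOn_pd2 hS Esw hp
  -- expand RHS of main
  have hw : AnalyticOnNhd ℝ (fun q => 2 * H (ψ q)) (Strip2 R) :=
    fun q hq => analyticAt_const.mul ((hHa _ (hψO q hq)).comp (hψa q hq))
  have hX : AnalyticOnNhd ℝ (fun q => lcross (pd1 ψ q) (pd2 ψ q)) (Strip2 R) :=
    bilin_analytic lcrossL hψu hψv
  have r1 : pd1 (fun q => (2 * H (ψ q)) • lcross (pd1 ψ q) (pd2 ψ q)) p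
      = pd1 (fun q => 2 * H (ψ q)) p • lcross (pd1 ψ p) (pd2 ψ p)
        + (2 * H (ψ p)) • pd1 (fun q => lcross (pd1 ψ q) (pd2 ψ q)) p :=
    pd1_smul_pt (hw p hp).differentiableAt (hX p hp).differentiableAt
  have hcomp : HasFDerivAt (fun q => H (ψ q))
      ((fderiv ℝ H (ψ p)).comp (fderiv ℝ ψ p)) p :=
    HasFDerivAt.comp p (hHa _ (hψO p hp)).differentiableAt.hasFDerivAt
      (hψa p hp).differentiableAt.hasFDerivAt
  have r2 : pd1 (fun q => 2 * H (ψ q)) p = 2 * fderiv ℝ H (ψ p) (pd1 ψ p) := by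
    have h2 : HasFDerivAt (fun q => 2 * H (ψ q))
        ((2 : ℝ) • ((fderiv ℝ H (ψ p)).comp (fderiv ℝ ψ p))) p := hcomp.const_mul 2
    rw [pd1, h2.fderiv]
    simp [pd1]
  have r3 : pd1 (fun q => lcross (pd1 ψ q) (pd2 ψ q)) p
      = lcross (pd1 (pd1 ψ) p) (pd2 ψ p) + lcross (pd1 ψ p) (pd2 (pd1 ψ) p) := by
    have h3 := pd1_bilin_pt lcrossL (hψu p hp).differentiableAt (hψv p hp).differentiableAt
    rw [show pd1 (pd2 ψ) p = pd2 (pd1 ψ) p from Esw hp] at h3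
    exact h3
  rw [l1, l2, r1, r2, r3] at main
  -- apply Jv to the original system
  have j1 : Jv (pd1 (pd1 ψ) p) + Jv (pd2 (pd2 ψ) p)
      = (2 * H (ψ p)) • Jv (lcross (pd1 ψ p) (pd2 ψ p)) := by
    have hjj := congrArg (fun x => Jv x) (hsys p hp)
    simpa [map_add, _root_.map_smul] using hjj
  -- expansions of derivatives of h
  have eh1 : Set.EqOn (pd1 (fun q => pd1 ψ q - Jv (ψ q)))
      (fun q => pd1 (pd1 ψ) q - Jv (pd1 ψ q)) (Strip2 R) := by
    intro q hq
    rw [pd1_sub_pt (hψu q hq).differentiableAt (hJψ q hq).differentiableAt,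
      pd1_clm_pt Jv (hψa q hq).differentiableAt]
  have eh2 : Set.EqOn (pd2 (fun q => pd1 ψ q - Jv (ψ q)))
      (fun q => pd2 (pd1 ψ) q - Jv (pd2 ψ q)) (Strip2 R) := by
    intro q hq
    rw [pd2_sub_pt (hψu q hq).differentiableAt (hJψ q hq).differentiableAt,
      pd2_clm_pt Jv (hψa q hq).differentiableAt]
  have c2 : pd2 (pd2 (fun q => pd1 ψ q - Jv (ψ q))) p
      = pd2 (pd2 (pd1 ψ)) p - Jv (pd2 (pd2 ψ) p) := by
    have hdj : DifferentiableAt ℝ (fun q => Jv (pd2 ψ q)) p :=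
      ((Jv.analyticAt _).comp (hψv p hp)).differentiableAt
    rw [eqOn_pd2 hS eh2 hp,
      pd2_sub_pt ((pd2_analytic hS hψu) p hp).differentiableAt hdj,
      pd2_clm_pt Jv (hψv p hp).differentiableAt]
  have c1 : pd1 (pd1 (fun q => pd1 ψ q - Jv (ψ q))) p
      = pd1 (pd1 (pd1 ψ)) p - Jv (pd1 (pd1 ψ) p) := by
    have hdj : DifferentiableAt ℝ (fun q => Jv (pd1 ψ q)) p :=
      ((Jv.analyticAt _).comp (hψu p hp)).differentiableAt
    rw [eqOn_pd1 hS eh1 hp,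
      pd1_sub_pt (hψuu p hp).differentiableAt hdj,
      pd1_clm_pt Jv (hψu p hp).differentiableAt]
  -- the rotational-invariance scalar identity
  have sc : fderiv ℝ H (ψ p) (pd1 ψ p) = fderiv ℝ H (ψ p) (pd1 ψ p - Jv (ψ p)) := by
    have hz := rot_fderiv_zero hHa hrot (hψO p hp)
    rw [map_sub, hz, sub_zero]
  -- decompositions
  have d1 : pd1 (pd1 ψ) p = pd1 (fun q => pd1 ψ q - Jv (ψ q)) p + Jv (pd1 ψ p) := by
    rw [eh1 hp]; module
  have d2 : pd2 (pd1 ψ) p = pd2 (fun q => pd1 ψ q - Jv (ψ q)) p + Jv (pd2 ψ p) := by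
    rw [eh2 hp]; module
  have jl := Jv_lcross (pd1 ψ p) (pd2 ψ p)
  rw [sc] at main
  rw [d1, d2, lcross_add_left, lcross_add_right] at main
  -- now assemble
  simp only []
  rw [c2, c1]
  have m2 : pd2 (pd2 (pd1 ψ)) p =
      (2 * fderiv ℝ H (ψ p) (pd1 ψ p - Jv (ψ p))) • lcross (pd1 ψ p) (pd2 ψ p)
      + (2 * H (ψ p)) •
          (lcross (pd1 (fun q => pd1 ψ q - Jv (ψ q)) p) (pd2 ψ p)
            + lcross (Jv (pd1 ψ p)) (pd2 ψ p)
            + (lcross (pd1 ψ p) (pd2 (fun q => pd1 ψ q - Jv (ψ q)) p)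
              + lcross (pd1 ψ p) (Jv (pd2 ψ p))))
      - pd1 (pd1 (pd1 ψ)) p := by
    rw [← main]; module
  have j2 : Jv (pd2 (pd2 ψ) p) =
      (2 * H (ψ p)) • Jv (lcross (pd1 ψ p) (pd2 ψ p)) - Jv (pd1 (pd1 ψ) p) := by
    rw [← j1]; module
  rw [m2, j2, ← jl]
  module

end KeyPDE

section StepB

variable {O : Set R3} {R c : ℝ} {H : R3 → ℝ} {ψ : ℝ × ℝ → R3}

lemma h_vanish_line (hR : 0 < R)
    (hHa : AnalyticOnNhd ℝ H O)
    (hrot : ∀ θ : ℝ, ∀ p ∈ O,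
      ((p.1 * Real.cos θ + p.2.1 * Real.sin θ,
        -(p.1 * Real.sin θ) + p.2.1 * Real.cos θ, p.2.2) : R3) ∈ O ∧
      H ((p.1 * Real.cos θ + p.2.1 * Real.sin θ,
          -(p.1 * Real.sin θ) + p.2.1 * Real.cos θ, p.2.2) : R3) = H p)
    (hψO : ∀ p ∈ Strip2 R, ψ p ∈ O)
    (hψa : AnalyticOnNhd ℝ ψ (Strip2 R))
    (hsys : ∀ p ∈ Strip2 R,
      pd1 (pd1 ψ) p + pd2 (pd2 ψ) p = (2 * H (ψ p)) • lcross (pd1 ψ p) (pd2 ψ p))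
    (h0 : ∀ u : ℝ, ψ (u, 0) = (0 : R3))
    (hbv : ∀ u : ℝ, pd2 ψ (u, 0) = (c * Real.cos u, -(c * Real.sin u), c)) :
    ∀ k : ℕ, ∀ u : ℝ, pd2^[k] (fun q => pd1 ψ q - Jv (ψ q)) (u, 0) = 0 := by
  have hS : IsOpen (Strip2 R) := strip2_open
  have hψu := pd1_analytic hS hψa
  have hψv := pd2_analytic hS hψa
  have hJψ : AnalyticOnNhd ℝ (fun q => Jv (ψ q)) (Strip2 R) :=
    fun q hq => (Jv.analyticAt _).comp (hψa q hq)
  have hh : AnalyticOnNhd ℝ (fun q => pd1 ψ q - Jv (ψ q)) (Strip2 R) :=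
    fun q hq => (hψu q hq).sub (hJψ q hq)
  have key := key_pde hR hHa hrot hψO hψa hsys
  -- base case k = 0
  have base0 : ∀ u : ℝ, (fun q => pd1 ψ q - Jv (ψ q)) (u, 0) = 0 := by
    intro u
    have hp1 : pd1 ψ (u, 0) = 0 :=
      pd1_line_vanish (hψa _ (mem_strip2 hR u)).differentiableAt h0
    simp [hp1, h0 u]
  -- base case k = 1
  have base1 : ∀ u : ℝ, pd2 (fun q => pd1 ψ q - Jv (ψ q)) (u, 0) = 0 := by
    intro u
    have hmem := mem_strip2 hR u
    have e1 : pd2 (fun q => pd1 ψ q - Jv (ψ q)) (u, 0)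
        = pd2 (pd1 ψ) (u, 0) - Jv (pd2 ψ (u, 0)) := by
      rw [pd2_sub_pt (hψu _ hmem).differentiableAt (hJψ _ hmem).differentiableAt,
        pd2_clm_pt Jv (hψa _ hmem).differentiableAt]
    have e2 : pd2 (pd1 ψ) (u, 0) = pd1 (pd2 ψ) (u, 0) := (pd_swap hS hψa hmem).symm
    have hD := hasDerivAt_line1 (f := pd2 ψ) (hψv _ hmem).differentiableAt
    have hfn : (fun t : ℝ => pd2 ψ (t, 0))
        = fun t : ℝ => ((c * Real.cos t, -(c * Real.sin t), c) : R3) := funext hbv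
    rw [hfn] at hD
    have hD2 : HasDerivAt (fun t : ℝ => ((c * Real.cos t, -(c * Real.sin t), c) : R3))
        ((-(c * Real.sin u), -(c * Real.cos u), 0) : R3) u := by
      refine HasDerivAt.prodMk ?_ (HasDerivAt.prodMk ?_ (hasDerivAt_const u c))
      · simpa using (Real.hasDerivAt_cos u).const_mul c
      · simpa using ((Real.hasDerivAt_sin u).const_mul c).fun_neg
    have e3 : pd1 (pd2 ψ) (u, 0) = ((-(c * Real.sin u), -(c * Real.cos u), 0) : R3) :=
      hD.unique hD2
    rw [e1, e2, e3, hbv u]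
    simp [Jv_apply, Prod.ext_iff]
  -- main strong induction
  intro k
  induction k using Nat.strong_induction_on with
  | _ k ih =>
    match k with
    | 0 => exact base0
    | 1 => exact base1
    | (k + 2) =>
      intro u
      have hmem := mem_strip2 hR u
      have ihk : ∀ j ≤ k + 1, ∀ u : ℝ,
          pd2^[j] (fun q => pd1 ψ q - Jv (ψ q)) (u, 0) = 0 := by
        intro j hj u'
        exact ih j (by omega) u'
      -- rewrite the double derivative via the PDE
      have estep : pd2^[k + 2] (fun q => pd1 ψ q - Jv (ψ q))
          = pd2^[k] (pd2 (pd2 (fun q => pd1 ψ q - Jv (ψ q)))) := by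
        rw [show k + 2 = k + 1 + 1 from rfl, Function.iterate_succ_apply,
          Function.iterate_succ_apply]
      rw [estep, eqOn_pd2_iter hS key k hmem]
      -- names for the three pieces
      set hfun : ℝ × ℝ → R3 := fun q => pd1 ψ q - Jv (ψ q) with hfd
      -- analyticity of pieces
      have hA2 : AnalyticOnNhd ℝ (fun p => (2 : ℝ) • fderiv ℝ H (ψ p)) (Strip2 R) :=
        fun p hp => analyticAt_const.fun_smul (((hHa.fderiv) (ψ p) (hψO p hp)).comp (hψa p hp))
      have hs : AnalyticOnNhd ℝ
          (fun p => 2 * fderiv ℝ H (ψ p) (pd1 ψ p - Jv (ψ p))) (Strip2 R) := by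
        have := bilin_analytic (ContinuousLinearMap.id ℝ (R3 →L[ℝ] ℝ)) hA2 hh
        exact this
      have hX2 : AnalyticOnNhd ℝ (fun p => lcross (pd1 ψ p) (pd2 ψ p)) (Strip2 R) :=
        bilin_analytic lcrossL hψu hψv
      have hpd1h := pd1_analytic hS hh
      have hpd2h := pd2_analytic hS hh
      have hG : AnalyticOnNhd ℝ (fun p => lcross (pd1 hfun p) (pd2 ψ p)
          + lcross (pd1 ψ p) (pd2 hfun p)) (Strip2 R) :=
        fun p hp => ((bilin_analytic lcrossL.flip hψv hpd1h) p hp).add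
          ((bilin_analytic lcrossL hψu hpd2h) p hp)
      have hw : AnalyticOnNhd ℝ (fun q => 2 * H (ψ q)) (Strip2 R) :=
        fun q hq => analyticAt_const.mul ((hHa _ (hψO q hq)).comp (hψa q hq))
      have hT1 : AnalyticOnNhd ℝ (fun p =>
          (2 * fderiv ℝ H (ψ p) (pd1 ψ p - Jv (ψ p))) • lcross (pd1 ψ p) (pd2 ψ p))
          (Strip2 R) := fun p hp => ((hs p hp).smul (hX2 p hp))
      have hT2 : AnalyticOnNhd ℝ (fun p =>
          (2 * H (ψ p)) • (lcross (pd1 hfun p) (pd2 ψ p)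
            + lcross (pd1 ψ p) (pd2 hfun p))) (Strip2 R) :=
        fun p hp => ((hw p hp).smul (hG p hp))
      have hT3 : AnalyticOnNhd ℝ (pd1 (pd1 hfun)) (Strip2 R) :=
        pd1_analytic hS hpd1h
      have hT12 : AnalyticOnNhd ℝ (fun p =>
          (2 * fderiv ℝ H (ψ p) (pd1 ψ p - Jv (ψ p))) • lcross (pd1 ψ p) (pd2 ψ p)
          + (2 * H (ψ p)) • (lcross (pd1 hfun p) (pd2 ψ p)
            + lcross (pd1 ψ p) (pd2 hfun p))) (Strip2 R) :=
        fun p hp => (hT1 p hp).add (hT2 p hp)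
      -- split the sum
      have e1 : pd2^[k] (fun p =>
          (2 * fderiv ℝ H (ψ p) (pd1 ψ p - Jv (ψ p))) • lcross (pd1 ψ p) (pd2 ψ p)
          + (2 * H (ψ p)) • (lcross (pd1 hfun p) (pd2 ψ p)
            + lcross (pd1 ψ p) (pd2 hfun p))
          - pd1 (pd1 hfun) p) (u, 0)
        = pd2^[k] (fun p =>
          (2 * fderiv ℝ H (ψ p) (pd1 ψ p - Jv (ψ p))) • lcross (pd1 ψ p) (pd2 ψ p)
          + (2 * H (ψ p)) • (lcross (pd1 hfun p) (pd2 ψ p)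
            + lcross (pd1 ψ p) (pd2 hfun p))) (u, 0)
          - pd2^[k] (pd1 (pd1 hfun)) (u, 0) := pd2_iter_sub hS hT12 hT3 k hmem
      have e2 : pd2^[k] (fun p =>
          (2 * fderiv ℝ H (ψ p) (pd1 ψ p - Jv (ψ p))) • lcross (pd1 ψ p) (pd2 ψ p)
          + (2 * H (ψ p)) • (lcross (pd1 hfun p) (pd2 ψ p)
            + lcross (pd1 ψ p) (pd2 hfun p))) (u, 0)
        = pd2^[k] (fun p =>
          (2 * fderiv ℝ H (ψ p) (pd1 ψ p - Jv (ψ p))) • lcross (pd1 ψ p) (pd2 ψ p)) (u, 0)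
          + pd2^[k] (fun p => (2 * H (ψ p)) • (lcross (pd1 hfun p) (pd2 ψ p)
            + lcross (pd1 ψ p) (pd2 hfun p))) (u, 0) := pd2_iter_add hS hT1 hT2 k hmem
      rw [e1, e2]
      -- vanishing of s (needed for T1), for all orders ≤ k
      have hvs : ∀ j ≤ k, ∀ u' : ℝ,
          pd2^[j] (fun p => 2 * fderiv ℝ H (ψ p) (pd1 ψ p - Jv (ψ p))) (u', 0) = 0 := by
        intro j hj u'
        have := bv_vanish hR (ContinuousLinearMap.id ℝ (R3 →L[ℝ] ℝ)) j
          (fun p => (2 : ℝ) • fderiv ℝ H (ψ p)) hfun hA2 hh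
          (fun i hi u'' => ihk i (by omega) u'') u'
        exact this
      -- T1 vanishes
      have hv1 : pd2^[k] (fun p =>
          (2 * fderiv ℝ H (ψ p) (pd1 ψ p - Jv (ψ p))) • lcross (pd1 ψ p) (pd2 ψ p))
          (u, 0) = 0 := by
        have := bv_vanish hR
          ((ContinuousLinearMap.lsmul ℝ ℝ : ℝ →L[ℝ] R3 →L[ℝ] R3).flip) k
          (fun p => lcross (pd1 ψ p) (pd2 ψ p))
          (fun p => 2 * fderiv ℝ H (ψ p) (pd1 ψ p - Jv (ψ p))) hX2 hs hvs u
        exact this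
      -- vanishing of pd1 hfun iterates on the line
      have hvp1 : ∀ j : ℕ, (j ≤ k + 1) → ∀ u' : ℝ, pd2^[j] (pd1 hfun) (u', 0) = 0 := by
        intro j hj u'
        rw [pd2_iter_pd1 hS hh j (mem_strip2 hR u')]
        exact pd1_line_vanish
          ((pd2_iter_analytic hS hh j _ (mem_strip2 hR u')).differentiableAt)
          (fun t => ihk j hj t)
      -- vanishing of G iterates
      have hvG : ∀ j ≤ k, ∀ u' : ℝ, pd2^[j] (fun p => lcross (pd1 hfun p) (pd2 ψ p)
          + lcross (pd1 ψ p) (pd2 hfun p)) (u', 0) = 0 := by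
        intro j hj u'
        have hmem' := mem_strip2 hR u'
        have hGa := bilin_analytic (E := R3) (F := R3) (W := R3) lcrossL.flip hψv hpd1h
        have hGb := bilin_analytic lcrossL hψu hpd2h
        have hfa : (fun p => lcross (pd1 hfun p) (pd2 ψ p) + lcross (pd1 ψ p) (pd2 hfun p))
            = fun p => lcrossL.flip (pd2 ψ p) (pd1 hfun p) + lcrossL (pd1 ψ p) (pd2 hfun p) := by
          funext p; simp [ContinuousLinearMap.flip_apply]
        have hsplit : pd2^[j] (fun p => lcrossL.flip (pd2 ψ p) (pd1 hfun p)
              + lcrossL (pd1 ψ p) (pd2 hfun p)) (u', 0)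
            = pd2^[j] (fun p => lcrossL.flip (pd2 ψ p) (pd1 hfun p)) (u', 0)
              + pd2^[j] (fun p => lcrossL (pd1 ψ p) (pd2 hfun p)) (u', 0) :=
          pd2_iter_add hS hGa hGb j hmem'
        rw [hfa, hsplit]
        have hva := bv_vanish hR lcrossL.flip j (pd2 ψ) (pd1 hfun) hψv hpd1h
          (fun i hi u'' => hvp1 i (by omega) u'') u'
        have hvb := bv_vanish hR lcrossL j (pd1 ψ) (pd2 hfun) hψu hpd2h
          (fun i hi u'' => by
            rw [← Function.iterate_succ_apply]
            exact ihk (i + 1) (by omega) u'') u'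
        rw [hva, hvb]
        simp
      -- T2 vanishes
      have hv2 : pd2^[k] (fun p =>
          (2 * H (ψ p)) • (lcross (pd1 hfun p) (pd2 ψ p)
            + lcross (pd1 ψ p) (pd2 hfun p))) (u, 0) = 0 := by
        have := bv_vanish hR (ContinuousLinearMap.lsmul ℝ ℝ : ℝ →L[ℝ] R3 →L[ℝ] R3) k
          (fun q => 2 * H (ψ q))
          (fun p => lcross (pd1 hfun p) (pd2 ψ p) + lcross (pd1 ψ p) (pd2 hfun p))
          hw hG hvG u
        exact this
      -- T3 vanishes
      have hv3 : pd2^[k] (pd1 (pd1 hfun)) (u, 0) = 0 := by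
        rw [pd2_iter_pd1 hS hpd1h k hmem]
        refine pd1_line_vanish
          ((pd2_iter_analytic hS hpd1h k _ hmem).differentiableAt) ?_
        intro t
        exact hvp1 k (by omega) t
      rw [hv1, hv2, hv3]
      simp

end StepB

section StepC

variable {O : Set R3} {R c : ℝ} {H : R3 → ℝ} {ψ : ℝ × ℝ → R3}

lemma h_zero (hR : 0 < R)
    (hHa : AnalyticOnNhd ℝ H O)
    (hrot : ∀ θ : ℝ, ∀ p ∈ O,
      ((p.1 * Real.cos θ + p.2.1 * Real.sin θ,
        -(p.1 * Real.sin θ) + p.2.1 * Real.cos θ, p.2.2) : R3) ∈ O ∧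
      H ((p.1 * Real.cos θ + p.2.1 * Real.sin θ,
          -(p.1 * Real.sin θ) + p.2.1 * Real.cos θ, p.2.2) : R3) = H p)
    (hψO : ∀ p ∈ Strip2 R, ψ p ∈ O)
    (hψa : AnalyticOnNhd ℝ ψ (Strip2 R))
    (hsys : ∀ p ∈ Strip2 R,
      pd1 (pd1 ψ) p + pd2 (pd2 ψ) p = (2 * H (ψ p)) • lcross (pd1 ψ p) (pd2 ψ p))
    (h0 : ∀ u : ℝ, ψ (u, 0) = (0 : R3))
    (hbv : ∀ u : ℝ, pd2 ψ (u, 0) = (c * Real.cos u, -(c * Real.sin u), c)) :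
    ∀ p ∈ Strip2 R, pd1 ψ p = Jv (ψ p) := by
  have hS : IsOpen (Strip2 R) := strip2_open
  have hψu := pd1_analytic hS hψa
  have hJψ : AnalyticOnNhd ℝ (fun q => Jv (ψ q)) (Strip2 R) :=
    fun q hq => (Jv.analyticAt _).comp (hψa q hq)
  have hh : AnalyticOnNhd ℝ (fun q => pd1 ψ q - Jv (ψ q)) (Strip2 R) :=
    fun q hq => (hψu q hq).sub (hJψ q hq)
  have hline := h_vanish_line hR hHa hrot hψO hψa hsys h0 hbv
  intro p hp
  have hmemv : ∀ t ∈ Set.Ioo (-R) R, ((p.1, t) : ℝ × ℝ) ∈ Strip2 R :=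
    fun t ht => ⟨ht.1, ht.2⟩
  have hfa : AnalyticOnNhd ℝ (fun t => (fun q => pd1 ψ q - Jv (ψ q)) (p.1, t))
      (Set.Ioo (-R) R) := by
    intro t ht
    exact (hh _ (hmemv t ht)).comp (analyticAt_const.prod analyticAt_id)
  have hder : ∀ k : ℕ, Set.EqOn (deriv^[k] (fun t => (fun q => pd1 ψ q - Jv (ψ q)) (p.1, t)))
      (fun t => pd2^[k] (fun q => pd1 ψ q - Jv (ψ q)) (p.1, t)) (Set.Ioo (-R) R) := by
    intro k
    induction k with
    | zero => intro t ht; rfl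
    | succ k ihk =>
      intro t ht
      rw [Function.iterate_succ_apply']
      have hev : deriv^[k] (fun t => (fun q => pd1 ψ q - Jv (ψ q)) (p.1, t))
          =ᶠ[nhds t] (fun t => pd2^[k] (fun q => pd1 ψ q - Jv (ψ q)) (p.1, t)) :=
        eventually_of_mem (isOpen_Ioo.mem_nhds ht) ihk
      rw [hev.deriv_eq]
      have hD := hasDerivAt_line2 (f := pd2^[k] (fun q => pd1 ψ q - Jv (ψ q)))
        ((pd2_iter_analytic hS hh k _ (hmemv t ht)).differentiableAt)
      rw [hD.deriv]
      exact (congrFun (Function.iterate_succ_apply' pd2 k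
        (fun q => pd1 ψ q - Jv (ψ q))) (p.1, t)).symm
  have hd0 : ∀ k : ℕ, deriv^[k] (fun t => (fun q => pd1 ψ q - Jv (ψ q)) (p.1, t)) 0 = 0 := by
    intro k
    rw [hder k ⟨by linarith, hR⟩]
    exact hline k p.1
  have := oneD_identity hR hfa hd0 p.2 ⟨hp.1, hp.2⟩
  simp only [] at this
  have heq : pd1 ψ (p.1, p.2) - Jv (ψ (p.1, p.2)) = 0 := this
  have hpp : ((p.1, p.2) : ℝ × ℝ) = p := rfl
  rw [hpp] at heq
  exact sub_eq_zero.mp heq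

end StepC

theorem stmt17' (O : Set R3) (R c : ℝ) (H : R3 → ℝ) (ψ : ℝ × ℝ → R3)
    (hR : 0 < R) (hc : c ≠ 0) (hO : IsOpen O) (h0O : ((0, 0, 0) : R3) ∈ O)
    (hHa : AnalyticOnNhd ℝ H O) (hHpos : ∀ p ∈ O, 0 < H p)
    (hrot : ∀ θ : ℝ, ∀ p ∈ O,
      ((p.1 * Real.cos θ + p.2.1 * Real.sin θ,
        -(p.1 * Real.sin θ) + p.2.1 * Real.cos θ, p.2.2) : R3) ∈ O ∧
      H ((p.1 * Real.cos θ + p.2.1 * Real.sin θ,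
          -(p.1 * Real.sin θ) + p.2.1 * Real.cos θ, p.2.2) : R3) = H p)
    (hψO : ∀ p ∈ Strip2 R, ψ p ∈ O)
    (hψa : AnalyticOnNhd ℝ ψ (Strip2 R))
    (hsys : ∀ p ∈ Strip2 R,
      pd1 (pd1 ψ) p + pd2 (pd2 ψ) p = (2 * H (ψ p)) • lcross (pd1 ψ p) (pd2 ψ p))
    (h0 : ∀ u : ℝ, ψ (u, 0) = (0 : R3))
    (hbv : ∀ u : ℝ, pd2 ψ (u, 0) = (c * Real.cos u, -(c * Real.sin u), c)) :
    ∀ θ : ℝ, ∀ p ∈ Strip2 R,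
      ψ (p.1 + θ, p.2) =
        (((ψ p).1 * Real.cos θ + (ψ p).2.1 * Real.sin θ,
          -((ψ p).1 * Real.sin θ) + (ψ p).2.1 * Real.cos θ, (ψ p).2.2) : R3) := by
  have hvec := h_zero hR hHa hrot hψO hψa hsys h0 hbv
  intro θ p hp
  have hpt : ∀ t : ℝ, ((p.1 + t, p.2) : ℝ × ℝ) ∈ Strip2 R := fun t => ⟨hp.1, hp.2⟩
  -- the rotational ODE along the horizontal line through p
  have hΨd : ∀ t : ℝ, HasDerivAt (fun s => ψ (p.1 + s, p.2))
      (Jv (ψ (p.1 + t, p.2))) t := by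
    intro t
    have hγ : HasDerivAt (fun s : ℝ => ((p.1 + s, p.2) : ℝ × ℝ)) ((1, 0) : ℝ × ℝ) t :=
      ((hasDerivAt_id t).const_add p.1).prodMk (hasDerivAt_const t p.2)
    have hcmp := ((hψa _ (hpt t)).differentiableAt.hasFDerivAt).comp_hasDerivAt t hγ
    have he : fderiv ℝ ψ (p.1 + t, p.2) (1, 0) = Jv (ψ (p.1 + t, p.2)) :=
      hvec _ (hpt t)
    rw [he] at hcmp
    exact hcmp
  -- component derivatives
  have ha : ∀ t : ℝ, HasDerivAt (fun s => (ψ (p.1 + s, p.2)).1)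
      ((ψ (p.1 + t, p.2)).2.1) t := by
    intro t
    have := ((ContinuousLinearMap.fst ℝ ℝ (ℝ × ℝ)).hasFDerivAt).comp_hasDerivAt t (hΨd t)
    simpa [Function.comp_def] using this
  have hb : ∀ t : ℝ, HasDerivAt (fun s => (ψ (p.1 + s, p.2)).2.1)
      (-(ψ (p.1 + t, p.2)).1) t := by
    intro t
    have := (((ContinuousLinearMap.fst ℝ ℝ ℝ).comp
      (ContinuousLinearMap.snd ℝ ℝ (ℝ × ℝ))).hasFDerivAt).comp_hasDerivAt t (hΨd t)
    simpa [Function.comp_def] using this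
  have hc3 : ∀ t : ℝ, HasDerivAt (fun s => (ψ (p.1 + s, p.2)).2.2) 0 t := by
    intro t
    have := (((ContinuousLinearMap.snd ℝ ℝ ℝ).comp
      (ContinuousLinearMap.snd ℝ ℝ (ℝ × ℝ))).hasFDerivAt).comp_hasDerivAt t (hΨd t)
    simpa [Function.comp_def] using this
  -- three conserved quantities
  have hw1 : ∀ t : ℝ, HasDerivAt (fun s => (ψ (p.1 + s, p.2)).1 * Real.cos s
      - (ψ (p.1 + s, p.2)).2.1 * Real.sin s) 0 t := by
    intro t
    have := ((ha t).fun_mul (Real.hasDerivAt_cos t)).fun_sub ((hb t).fun_mul (Real.hasDerivAt_sin t))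
    exact this.congr_deriv (by ring)
  have hw2 : ∀ t : ℝ, HasDerivAt (fun s => (ψ (p.1 + s, p.2)).1 * Real.sin s
      + (ψ (p.1 + s, p.2)).2.1 * Real.cos s) 0 t := by
    intro t
    have := ((ha t).fun_mul (Real.hasDerivAt_sin t)).fun_add ((hb t).fun_mul (Real.hasDerivAt_cos t))
    exact this.congr_deriv (by ring)
  have hconst : ∀ (f : ℝ → ℝ), (∀ t : ℝ, HasDerivAt f 0 t) → f θ = f 0 := by
    intro f hf
    exact is_const_of_deriv_eq_zero (fun t => (hf t).differentiableAt)
      (fun t => (hf t).deriv) θ 0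
  have hp0 : ((p.1 + 0, p.2) : ℝ × ℝ) = p := by simp
  have E1 : (ψ (p.1 + θ, p.2)).1 * Real.cos θ - (ψ (p.1 + θ, p.2)).2.1 * Real.sin θ
      = (ψ p).1 := by
    have := hconst _ hw1
    simpa [hp0] using this
  have E2 : (ψ (p.1 + θ, p.2)).1 * Real.sin θ + (ψ (p.1 + θ, p.2)).2.1 * Real.cos θ
      = (ψ p).2.1 := by
    have := hconst _ hw2
    simpa [hp0] using this
  have E3 : (ψ (p.1 + θ, p.2)).2.2 = (ψ p).2.2 := by
    have := hconst _ hc3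
    simpa [hp0] using this
  have pyth : Real.sin θ ^ 2 + Real.cos θ ^ 2 = 1 := Real.sin_sq_add_cos_sq θ
  refine Prod.ext ?_ (Prod.ext ?_ ?_)
  · show (ψ (p.1 + θ, p.2)).1 = (ψ p).1 * Real.cos θ + (ψ p).2.1 * Real.sin θ
    linear_combination Real.cos θ * E1 + Real.sin θ * E2
      - (ψ (p.1 + θ, p.2)).1 * pyth
  · show (ψ (p.1 + θ, p.2)).2.1 = -((ψ p).1 * Real.sin θ) + (ψ p).2.1 * Real.cos θ
    linear_combination (-Real.sin θ) * E1 + Real.cos θ * E2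
      - (ψ (p.1 + θ, p.2)).2.1 * pyth
  · exact E3


/-- rotational equivariance, equation (6.1) of the paper: if `ℋ` is
rotationally symmetric around the `z`-axis and `ψ` solves the Cauchy problem with
rotationally symmetric initial data `∂_vψ(u,0) = c(cos u, −sin u, 1)`, then
`ψ(u+θ, v)` is the rotation by `θ` of `ψ(u,v)`. -/
theorem stmt17 (O : Set R3) (R c : ℝ) (H : R3 → ℝ) (ψ : ℝ × ℝ → R3)
    (hR : 0 < R) (hc : c ≠ 0) (hO : IsOpen O) (h0O : ((0, 0, 0) : R3) ∈ O)
    (hHa : AnalyticOnNhd ℝ H O) (hHpos : ∀ p ∈ O, 0 < H p)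
    (hrot : ∀ θ : ℝ, ∀ p ∈ O,
      ((p.1 * Real.cos θ + p.2.1 * Real.sin θ,
        -(p.1 * Real.sin θ) + p.2.1 * Real.cos θ, p.2.2) : R3) ∈ O ∧
      H ((p.1 * Real.cos θ + p.2.1 * Real.sin θ,
          -(p.1 * Real.sin θ) + p.2.1 * Real.cos θ, p.2.2) : R3) = H p)
    (hψO : ∀ p ∈ Strip2 R, ψ p ∈ O)
    (hψa : AnalyticOnNhd ℝ ψ (Strip2 R))
    (hsys : ∀ p ∈ Strip2 R,
      pd1 (pd1 ψ) p + pd2 (pd2 ψ) p = (2 * H (ψ p)) • lcross (pd1 ψ p) (pd2 ψ p))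
    (h0 : ∀ u : ℝ, ψ (u, 0) = (0 : R3))
    (hbv : ∀ u : ℝ, pd2 ψ (u, 0) = (c * Real.cos u, -(c * Real.sin u), c)) :
    ∀ θ : ℝ, ∀ p ∈ Strip2 R,
      ψ (p.1 + θ, p.2) =
        (((ψ p).1 * Real.cos θ + (ψ p).2.1 * Real.sin θ,
          -((ψ p).1 * Real.sin θ) + (ψ p).2.1 * Real.cos θ, (ψ p).2.2) : R3) := by
  exact stmt17' O R c H ψ hR hc hO h0O hHa hHpos hrot hψO hψa hsys h0 hbv
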